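/- arXiv:1808.06674 — 2 statements merged into one kernel-verified Lean document; each statement's English description precedes it below -/
import Mathlib

section
/- Let J be a real 2m×2m skew-symmetric matrix, H a real 2m×2m symmetric matrix, and V a real 2m×n matrix satisfying Vᵀ H V = Iₙ. Set H_n := Vᵀ H J H V. Let z : ℝ → ℝⁿ be differentiable with z′(t) = H_n·z(t) for all t and z(0) = Vᵀ H y₀ for some y₀ ∈ ℝ^{2m}, and define y_H(t) := V·z(t). Then for every natural number k, the function t ↦ ½ y_H(t)ᵀ H V (H_n)^{2k} Vᵀ H y_H(t) is constant in t. -/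
open Matrix

/-! The projected matrix `Hₙ = (H V)ᵀ J (H V)` is skew-symmetric, so along any solution of
`ż = Hₙ z` the quadratic form `zᵀ A z` has derivative `zᵀ (Hₙᵀ A + A Hₙ) z`, which vanishes for
every `A` commuting with `Hₙ`, in particular for `A = Hₙ ^ (2k)`. Because `Vᵀ H V = 1`, the first
integral evaluated at `y_H = V z` is exactly `½ zᵀ Hₙ ^ (2k) z`. -/

section Derivative

variable {𝕜 ι κ : Type*} [NontriviallyNormedField 𝕜] [Fintype ι]
  {u v : 𝕜 → ι → 𝕜} {u' v' : ι → 𝕜} {x : 𝕜}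

theorem HasDerivAt.dotProduct (hu : HasDerivAt u u' x) (hv : HasDerivAt v v' x) :
    HasDerivAt (fun r => u r ⬝ᵥ v r) (u' ⬝ᵥ v x + u x ⬝ᵥ v') x := by
  have hu := hasDerivAt_pi.1 hu
  have hv := hasDerivAt_pi.1 hv
  have hsum := HasDerivAt.fun_sum (u := Finset.univ) fun i _ => (hu i).mul (hv i)
  simpa only [_root_.dotProduct, Pi.mul_apply, ← Finset.sum_add_distrib] using hsum

theorem HasDerivAt.mulVec (A : Matrix κ ι 𝕜) (hu : HasDerivAt u u' x) :
    HasDerivAt (fun r => A *ᵥ u r) (A *ᵥ u') x :=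
  hasDerivAt_pi.2 fun i => by
    have h := (hasDerivAt_const x (A i)).dotProduct hu
    rwa [zero_dotProduct, zero_add] at h

end Derivative

namespace Matrix

variable {ι κ R : Type*}

theorem transpose_mul_mul_self_eq_neg [Fintype κ] [CommRing R] {J : Matrix κ κ R} (hJ : Jᵀ = -J)
    (B : Matrix κ ι R) : (Bᵀ * J * B)ᵀ = -(Bᵀ * J * B) := by
  simp only [transpose_mul, transpose_transpose, hJ, Matrix.mul_neg, Matrix.neg_mul,
    Matrix.mul_assoc]

theorem mulVec_dotProduct_mulVec_mulVec [Fintype ι] [Fintype κ] [CommSemiring R]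
    (V : Matrix κ ι R) (M : Matrix κ κ R) (x : ι → R) :
    V *ᵥ x ⬝ᵥ (M *ᵥ (V *ᵥ x)) = x ⬝ᵥ ((Vᵀ * M * V) *ᵥ x) := by
  rw [Matrix.mul_assoc, ← mulVec_mulVec, ← mulVec_mulVec, dotProduct_mulVec x, vecMul_transpose]

theorem dotProduct_mulVec_self_eq_of_hasDerivAt [Fintype ι] {𝕜 : Type*} [RCLike 𝕜]
    {S A : Matrix ι ι 𝕜} (hS : Sᵀ = -S) (hSA : Commute S A) {z : 𝕜 → ι → 𝕜}
    (hz : ∀ t, HasDerivAt z (S *ᵥ z t) t) (t s : 𝕜) :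
    z t ⬝ᵥ (A *ᵥ z t) = z s ⬝ᵥ (A *ᵥ z s) := by
  have hderiv : ∀ r, HasDerivAt (fun r => z r ⬝ᵥ (A *ᵥ z r)) 0 r := by
    intro r
    have hzero : S *ᵥ z r ⬝ᵥ (A *ᵥ z r) + z r ⬝ᵥ (A *ᵥ (S *ᵥ z r)) = 0 := by
      rw [dotProduct_comm, dotProduct_mulVec, ← mulVec_transpose, hS, neg_mulVec, mulVec_mulVec,
        mulVec_mulVec, hSA.eq, dotProduct_comm, ← dotProduct_add, neg_add_cancel, dotProduct_zero]
    simpa only [hzero] using (hz r).dotProduct ((hz r).mulVec A)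
  exact is_const_of_deriv_eq_zero (fun r => (hderiv r).differentiableAt)
    (fun r => (hderiv r).deriv) t s

end Matrix

theorem apmh_preserves_first_integrals_general {m n : ℕ}
    (J H : Matrix (Fin (2 * m)) (Fin (2 * m)) ℝ)
    (hJ : Jᵀ = -J) (hH : Hᵀ = H)
    (V : Matrix (Fin (2 * m)) (Fin n) ℝ)
    (hV : Vᵀ * H * V = 1)
    (Hn : Matrix (Fin n) (Fin n) ℝ)
    (hHn : Hn = Vᵀ * H * J * H * V)
    (z : ℝ → (Fin n → ℝ))
    (hz : ∀ t : ℝ, HasDerivAt z (Hn *ᵥ z t) t)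
    (yH : ℝ → (Fin (2 * m) → ℝ))
    (hyH : ∀ t : ℝ, yH t = V *ᵥ z t)
    (k : ℕ) (t s : ℝ) :
    (1 / 2 : ℝ) * (yH t ⬝ᵥ ((H * V * Hn ^ (2 * k) * Vᵀ * H) *ᵥ yH t)) =
      (1 / 2 : ℝ) * (yH s ⬝ᵥ ((H * V * Hn ^ (2 * k) * Vᵀ * H) *ᵥ yH s)) := by
  have hskew : Hnᵀ = -Hn := by
    have hHn' : Hn = (H * V)ᵀ * J * (H * V) := by
      rw [hHn, transpose_mul, hH]; simp only [Matrix.mul_assoc]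
    rw [hHn']
    exact transpose_mul_mul_self_eq_neg hJ _
  have hproj : Vᵀ * (H * V * Hn ^ (2 * k) * Vᵀ * H) * V = Hn ^ (2 * k) := by
    calc Vᵀ * (H * V * Hn ^ (2 * k) * Vᵀ * H) * V
        = (Vᵀ * H * V) * Hn ^ (2 * k) * (Vᵀ * H * V) := by simp only [Matrix.mul_assoc]
      _ = Hn ^ (2 * k) := by rw [hV, Matrix.one_mul, Matrix.mul_one]
  simp only [hyH, mulVec_dotProduct_mulVec_mulVec, hproj]
  rw [dotProduct_mulVec_self_eq_of_hasDerivAt hskew ((Commute.refl Hn).pow_right _) hz t s]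

/-- First-integral preservation for the Arnoldi projection method with modified
inner product (APMH): if `Vᵀ H V = Iₙ`, `H_n = Vᵀ H J H V`, `z` solves the
projected system `ż = H_n z` with `z(0) = Vᵀ H y₀`, and `y_H = V z`, then each
quantity `t ↦ ½ y_H(t)ᵀ H V (H_n)^(2k) Vᵀ H y_H(t)` is constant in `t`. -/
theorem apmh_preserves_first_integrals {m n : ℕ}
    (J H : Matrix (Fin (2 * m)) (Fin (2 * m)) ℝ)
    (hJ : Jᵀ = -J) (hH : Hᵀ = H)
    (V : Matrix (Fin (2 * m)) (Fin n) ℝ)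
    (hV : Vᵀ * H * V = 1)
    (Hn : Matrix (Fin n) (Fin n) ℝ)
    (hHn : Hn = Vᵀ * H * J * H * V)
    (y₀ : Fin (2 * m) → ℝ)
    (z : ℝ → (Fin n → ℝ))
    (hz : ∀ t : ℝ, HasDerivAt z (Hn *ᵥ z t) t)
    (hz0 : z 0 = Vᵀ *ᵥ (H *ᵥ y₀))
    (yH : ℝ → (Fin (2 * m) → ℝ))
    (hyH : ∀ t : ℝ, yH t = V *ᵥ z t)
    (k : ℕ) (t s : ℝ) :
    (1 / 2 : ℝ) * (yH t ⬝ᵥ ((H * V * Hn ^ (2 * k) * Vᵀ * H) *ᵥ yH t)) =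
      (1 / 2 : ℝ) * (yH s ⬝ᵥ ((H * V * Hn ^ (2 * k) * Vᵀ * H) *ᵥ yH s)) :=
  apmh_preserves_first_integrals_general J H hJ hH V hV Hn hHn z hz yH hyH k t s
end

section
/- Let A be a real 2m×2m skew-symmetric matrix and V a real 2m×n matrix with Vᵀ V = Iₙ. Set H_n := Vᵀ A V. Let z : ℝ → ℝⁿ be differentiable with z′(t) = H_n·z(t) for all t, and define y_A(t) := V·z(t). Then for every natural number k, the function t ↦ ½ y_A(t)ᵀ V (H_n)^{2k} Vᵀ y_A(t) is constant in t. -/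
open Matrix

/-!
Since `Vᵀ V = 1`, the integral equals `z ⬝ᵥ (Hn ^ (2k) *ᵥ z)`. Along `ż = Hn z` its derivative is
`z ⬝ᵥ ((Hnᵀ M + M Hn) *ᵥ z)` with `M = Hn ^ (2k)`, which vanishes because `Hn = Vᵀ A V` is
skew-symmetric and commutes with its own powers.
-/

section Calculus

variable {𝕜 ι : Type*} [NontriviallyNormedField 𝕜] [Fintype ι]

theorem HasDerivAt.dotProduct_s7 {f g : 𝕜 → ι → 𝕜} {f' g' : ι → 𝕜} {x : 𝕜}
    (hf : HasDerivAt f f' x) (hg : HasDerivAt g g' x) :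
    HasDerivAt (fun t => f t ⬝ᵥ g t) (f' ⬝ᵥ g x + f x ⬝ᵥ g') x := by
  rw [hasDerivAt_pi] at hf hg
  exact (HasDerivAt.fun_sum fun i _ => (hf i).mul (hg i)).congr_deriv
    Finset.sum_add_distrib

theorem HasDerivAt.mulVec_s7 {κ : Type*} (M : Matrix κ ι 𝕜) {f : 𝕜 → ι → 𝕜} {f' : ι → 𝕜} {x : 𝕜}
    (hf : HasDerivAt f f' x) :
    HasDerivAt (fun t => M *ᵥ f t) (M *ᵥ f') x := by
  rw [hasDerivAt_pi] at hf ⊢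
  exact fun i => HasDerivAt.fun_sum fun j _ => (hf j).const_mul (M i j)

end Calculus

theorem Matrix.transpose_mul_mul_eq_neg_of_transpose_eq_neg {R m n : Type*} [CommRing R]
    [Fintype m] {A : Matrix m m R} (hA : Aᵀ = -A) (V : Matrix m n R) :
    (Vᵀ * A * V)ᵀ = -(Vᵀ * A * V) := by
  simp [Matrix.transpose_mul, hA, Matrix.mul_assoc]

theorem Matrix.dotProduct_mulVec_conj {R m n : Type*} [CommRing R] [Fintype m] [Fintype n]
    [DecidableEq n] {V : Matrix m n R} (hV : Vᵀ * V = 1) (M : Matrix n n R) (z : n → R) :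
    (V *ᵥ z) ⬝ᵥ ((V * M * Vᵀ) *ᵥ (V *ᵥ z)) = z ⬝ᵥ (M *ᵥ z) := by
  rw [mulVec_mulVec, Matrix.mul_assoc (V * M), hV, Matrix.mul_one, ← mulVec_mulVec,
    dotProduct_mulVec, ← mulVec_transpose, mulVec_mulVec, hV, one_mulVec]

theorem Matrix.dotProduct_mulVec_add_eq_zero {R n : Type*} [CommRing R] [Fintype n]
    {H : Matrix n n R} (hH : Hᵀ = -H) {M : Matrix n n R} (hHM : Commute H M) (z : n → R) :
    (H *ᵥ z) ⬝ᵥ (M *ᵥ z) + z ⬝ᵥ (M *ᵥ (H *ᵥ z)) = 0 := by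
  have hswap : z ⬝ᵥ (Hᵀ *ᵥ (M *ᵥ z)) = (H *ᵥ z) ⬝ᵥ (M *ᵥ z) := by
    rw [dotProduct_mulVec z, vecMul_transpose]
  rw [← hswap, hH, neg_mulVec, mulVec_mulVec, mulVec_mulVec, hHM.eq, dotProduct_neg,
    neg_add_cancel]

theorem Matrix.dotProduct_mulVec_self_eq_of_hasDerivAt_s7 {n : Type*} [Fintype n]
    {H M : Matrix n n ℝ} (hH : Hᵀ = -H) (hHM : Commute H M) {z : ℝ → n → ℝ}
    (hz : ∀ t, HasDerivAt z (H *ᵥ z t) t) (t s : ℝ) :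
    z t ⬝ᵥ (M *ᵥ z t) = z s ⬝ᵥ (M *ᵥ z s) := by
  have hderiv : ∀ u, HasDerivAt (fun r => z r ⬝ᵥ (M *ᵥ z r)) 0 u := fun u =>
    ((hz u).dotProduct_s7 ((hz u).mulVec_s7 M)).congr_deriv
      (dotProduct_mulVec_add_eq_zero hH hHM (z u))
  exact is_const_of_deriv_eq_zero (fun u => (hderiv u).differentiableAt)
    (fun u => (hderiv u).deriv) t s

/-- Preservation of the modified first integrals by the Arnoldi projection
method: for `A` skew-symmetric, `V` with orthonormal columns (`Vᵀ V = Iₙ`),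
`H_n = Vᵀ A V`, `z` solving `ż = H_n z` and `y_A = V z`, each quantity
`t ↦ ½ y_A(t)ᵀ V (H_n)^(2k) Vᵀ y_A(t)` is constant in `t`. -/
theorem apm_preserves_modified_integrals {m n : ℕ}
    (A : Matrix (Fin (2 * m)) (Fin (2 * m)) ℝ)
    (hA : Aᵀ = -A)
    (V : Matrix (Fin (2 * m)) (Fin n) ℝ)
    (hV : Vᵀ * V = 1)
    (Hn : Matrix (Fin n) (Fin n) ℝ)
    (hHn : Hn = Vᵀ * A * V)
    (z : ℝ → (Fin n → ℝ))
    (hz : ∀ t : ℝ, HasDerivAt z (Hn *ᵥ z t) t)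
    (yA : ℝ → (Fin (2 * m) → ℝ))
    (hyA : ∀ t : ℝ, yA t = V *ᵥ z t)
    (k : ℕ) (t s : ℝ) :
    (1 / 2 : ℝ) * (yA t ⬝ᵥ ((V * Hn ^ (2 * k) * Vᵀ) *ᵥ yA t)) =
      (1 / 2 : ℝ) * (yA s ⬝ᵥ ((V * Hn ^ (2 * k) * Vᵀ) *ᵥ yA s)) := by
  have hskew : Hnᵀ = -Hn := hHn ▸ transpose_mul_mul_eq_neg_of_transpose_eq_neg hA V
  rw [hyA, hyA, dotProduct_mulVec_conj hV, dotProduct_mulVec_conj hV,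
    dotProduct_mulVec_self_eq_of_hasDerivAt_s7 hskew (Commute.self_pow Hn (2 * k)) hz t s]
end
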